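/- arXiv:2004.06238 — 11 statements merged into one kernel-verified Lean document; each statement's English description precedes it below -/
import Mathlib

section
/- Let L be a complete lattice and c a grounded extensional monotone endomap of L. Then Φ(c) is a preneighbourhood system on L. Moreover, if (c_i)_{i∈I} is a nonempty family of grounded extensional monotone endomaps of L, then the pointwise supremum c given by c(x) = ⨆_{i∈I} c_i(x) is again a grounded extensional monotone endomap of L, and Φ(c)(x) = ⋂_{i∈I} Φ(c_i)(x) for every x ∈ L (i.e. Φ sends pointwise suprema of endomaps to pointwise intersections of preneighbourhood systems). -/
variable {L K N : Type*}

/-- A filter in a complete lattice: nonempty, upward closed, closed under binary meets. -/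
def IsLatFilter [CompleteLattice L] (F : Set L) : Prop :=
  F.Nonempty ∧ (∀ a ∈ F, ∀ b : L, a ≤ b → b ∈ F) ∧ (∀ a ∈ F, ∀ b ∈ F, a ⊓ b ∈ F)

/-- A preneighbourhood system on a complete lattice. -/
def IsPnbd [CompleteLattice L] (μ : L → Set L) : Prop :=
  (∀ x : L, IsLatFilter (μ x)) ∧ (∀ x y : L, x ≤ y → μ y ⊆ μ x) ∧
    (∀ x : L, ∀ p ∈ μ x, x ≤ p)

/-- The preneighbourhood system induced by a grounded extensional monotone endomap. -/
def Phi [CompleteLattice L] (c : L → L) : L → Set L := fun x => {u : L | c x ≤ u}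

/-- The closure of `p` with respect to a preneighbourhood system `μ`. -/
def cls [CompleteLattice L] (μ : L → Set L) (p : L) : L :=
  sSup {x : L | x ≠ ⊤ ∧ ∀ u ∈ μ x, u ⊓ p ≠ ⊥}

theorem stmt_0 [CompleteLattice L] :
    (∀ c : L → L, Monotone c → (∀ x, x ≤ c x) → c ⊥ = ⊥ → IsPnbd (Phi c)) ∧
    (∀ (I : Type*) (c : I → L → L), Nonempty I →
      (∀ i, Monotone (c i)) → (∀ i x, x ≤ c i x) → (∀ i, c i ⊥ = ⊥) →
      (Monotone (fun x : L => ⨆ i, c i x) ∧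
        (∀ x : L, x ≤ ⨆ i, c i x) ∧
        (⨆ i, c i ⊥) = (⊥ : L) ∧
        ∀ x : L, Phi (fun x : L => ⨆ i, c i x) x = ⋂ i, Phi (c i) x)) := by
  constructor
  · intro c hmono hext _
    refine ⟨fun x => ⟨⟨c x, le_refl _⟩, ?_, ?_⟩, ?_, ?_⟩
    · intro a ha b hab; exact ha.trans hab
    · intro a ha b hb; exact le_inf ha hb
    · intro x y hxy u hu; exact (hmono hxy).trans hu
    · intro x p hp; exact (hext x).trans hp
  · intro I c hI hmono hext hgr
    refine ⟨?_, ?_, ?_, ?_⟩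
    · intro a b hab; exact iSup_mono fun i => hmono i hab
    · intro x; exact (hext hI.some x).trans (le_iSup (fun i => c i x) hI.some)
    · simp [hgr]
    · intro x
      ext u
      simp only [Phi, Set.mem_setOf_eq, Set.mem_iInter, iSup_le_iff]
end

section
/- Let L be a complete lattice and c a grounded extensional monotone endomap of L. The preneighbourhood system Φ(c) is a weak neighbourhood system (that is, for every x ∈ L and every p ∈ Φ(c)(x) there exists q ∈ Φ(c)(x) with p ∈ Φ(c)(q)) if and only if c is idempotent, i.e. c(c(x)) = c(x) for all x ∈ L. -/
variable {L K N : Type*}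

theorem stmt_1 [CompleteLattice L] (c : L → L) (hmono : Monotone c)
    (hext : ∀ x, x ≤ c x) (hgr : c ⊥ = ⊥) :
    (∀ x : L, ∀ p ∈ Phi c x, ∃ q ∈ Phi c x, p ∈ Phi c q) ↔
      (∀ x : L, c (c x) = c x) := by
  constructor
  · intro h x
    obtain ⟨q, hq, hpq⟩ := h x (c x) le_rfl
    exact le_antisymm (le_trans (hmono hq) hpq) (hext _)
  · intro h x p hp
    exact ⟨c x, le_rfl, (h x).le.trans hp⟩
end

section
/- Let L be a complete lattice and c a grounded extensional monotone endomap of L. The preneighbourhood system Φ(c) is a neighbourhood system — i.e. it is a weak neighbourhood system (for every x and every p ∈ Φ(c)(x) there is q ∈ Φ(c)(x) with p ∈ Φ(c)(q)) and satisfies Φ(c)(⨆S) = ⋂_{s ∈ S} Φ(c)(s) for every subset S ⊆ L — if and only if c is idempotent and preserves arbitrary suprema (c(⨆S) = ⨆_{s∈S} c(s) for every S ⊆ L). -/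
variable {L K N : Type*}

theorem stmt_2 [CompleteLattice L] (c : L → L) (hmono : Monotone c)
    (hext : ∀ x, x ≤ c x) (hgr : c ⊥ = ⊥) :
    ((∀ x : L, ∀ p ∈ Phi c x, ∃ q ∈ Phi c x, p ∈ Phi c q) ∧
      (∀ S : Set L, Phi c (sSup S) = ⋂ s ∈ S, Phi c s)) ↔
    ((∀ x : L, c (c x) = c x) ∧ (∀ S : Set L, c (sSup S) = ⨆ s ∈ S, c s)) := by
  constructor
  · rintro ⟨hw, hs⟩
    constructor
    · intro x
      obtain ⟨q, hq, hcq⟩ := hw x (c x) (le_refl _)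
      exact le_antisymm (le_trans (hmono hq) hcq) (hext _)
    · intro S
      have h : ∀ u : L, c (sSup S) ≤ u ↔ (⨆ s ∈ S, c s) ≤ u := by
        intro u
        have := Set.ext_iff.mp (hs S) u
        simp only [Phi, Set.mem_setOf_eq, Set.mem_iInter] at this
        rw [this]
        simp [iSup_le_iff]
      exact le_antisymm ((h _).mpr le_rfl) ((h _).mp le_rfl)
  · rintro ⟨hid, hs⟩
    constructor
    · intro x p hp
      exact ⟨c x, le_rfl, by simpa [Phi, hid x] using hp⟩
    · intro S
      ext u
      simp only [Phi, Set.mem_setOf_eq, Set.mem_iInter, hs S, iSup_le_iff]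
end

section
/- Let L be a complete lattice, μ a preneighbourhood system on L, and c a grounded extensional monotone endomap of L. Then μ(x) ⊆ Φ(c)(x) holds for every x ∈ L if and only if c(x) ≤ ⨅_{u ∈ μ(x)} u holds for every x ∈ L; moreover ⨅_{u ∈ Φ(c)(x)} u = c(x) for every x ∈ L. (This is the Galois adjunction Φ ⊣ Ψ with Ψ∘Φ = id, where Ψ(μ)(x) = ⨅_{u∈μ(x)} u.) -/
variable {L K N : Type*}

theorem stmt_3 [CompleteLattice L] (μ : L → Set L) (hμ : IsPnbd μ)
    (c : L → L) (hmono : Monotone c) (hext : ∀ x, x ≤ c x) (hgr : c ⊥ = ⊥) :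
    ((∀ x : L, μ x ⊆ Phi c x) ↔ (∀ x : L, c x ≤ ⨅ u ∈ μ x, u)) ∧
      (∀ x : L, (⨅ u ∈ Phi c x, u) = c x) := by
  constructor
  · constructor
    · intro h x
      exact le_iInf fun u => le_iInf fun hu => h x hu
    · intro h x u hu
      exact le_trans (h x) (iInf_le_of_le u (iInf_le _ hu))
  · intro x
    apply le_antisymm
    · exact iInf_le_of_le (c x) (iInf_le _ le_rfl)
    · exact le_iInf fun u => le_iInf fun hu => hu
end

section
/- Let L be a complete lattice and μ a weak neighbourhood system on L, i.e. a preneighbourhood system such that for every x ∈ L and every p ∈ μ(x) there exists q ∈ μ(x) with p ∈ μ(q). Then the map c : L → L defined by c(x) = ⨅_{u ∈ μ(x)} u is idempotent: c(c(x)) = c(x) for every x ∈ L. -/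
variable {L K N : Type*}

theorem stmt_4 [CompleteLattice L] (μ : L → Set L) (hμ : IsPnbd μ)
    (hweak : ∀ x : L, ∀ p ∈ μ x, ∃ q ∈ μ x, p ∈ μ q) :
    ∀ x : L, (⨅ u ∈ μ (⨅ u ∈ μ x, u), u) = ⨅ u ∈ μ x, u := by
  obtain ⟨hfil, hanti, hle⟩ := hμ
  intro x
  set c := (⨅ u ∈ μ x, u) with hc
  apply le_antisymm
  · -- c(c) ≤ c : every p ∈ μ x is in μ c
    apply le_iInf₂
    intro p hp
    obtain ⟨q, hq, hpq⟩ := hweak x p hp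
    have hcq : c ≤ q := biInf_le _ hq
    have : p ∈ μ c := hanti c q hcq hpq
    exact biInf_le _ this
  · -- c ≤ c(c) : μ c ⊆ μ x
    have hxc : x ≤ c := le_iInf₂ (fun u hu => hle x u hu)
    apply le_iInf₂
    intro p hp
    exact biInf_le _ (hanti x c hxc hp)
end

section
/- Let L be a complete lattice and μ a preneighbourhood system on L. The closure operation cls_μ is monotone (p ≤ q implies cls_μ(p) ≤ cls_μ(q)), grounded (cls_μ(⊥) = ⊥), and extensional below the top: p ≤ cls_μ(p) for every p ∈ L with p ≠ ⊤. -/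
variable {L K N : Type*}

theorem stmt_5 [CompleteLattice L] (μ : L → Set L) (hμ : IsPnbd μ) :
    Monotone (cls μ) ∧ cls μ (⊥ : L) = ⊥ ∧ ∀ p : L, p ≠ ⊤ → p ≤ cls μ p := by
  refine ⟨?_, ?_, ?_⟩
  · intro p q hpq
    apply sSup_le_sSup
    rintro x ⟨hx, h⟩
    refine ⟨hx, fun u hu hb => ?_⟩
    exact h u hu (le_bot_iff.mp (hb ▸ inf_le_inf_left u hpq))
  · apply le_bot_iff.mp
    apply sSup_le
    rintro x ⟨hx, h⟩
    obtain ⟨u, hu⟩ := (hμ.1 x).1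
    exact absurd (inf_bot_eq u) (h u hu)
  · intro p hp
    rcases eq_or_ne p ⊥ with rfl | hpb
    · exact bot_le
    · apply le_sSup
      refine ⟨hp, fun u hu => ?_⟩
      rw [inf_eq_right.mpr (hμ.2.2 p u hu)]
      exact hpb
end

section
/- Let L be a complete lattice and μ a preneighbourhood system on L. Suppose every filter F in L with ⊥ ∉ F is contained in a prime filter, i.e. a filter P with ⊥ ∉ P such that a ⊔ b ∈ P implies a ∈ P or b ∈ P. Then the closure operation is additive: cls_μ(p ⊔ q) = cls_μ(p) ⊔ cls_μ(q) for all p, q ∈ L. -/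
variable {L K N : Type*}

theorem stmt_7 [CompleteLattice L] (μ : L → Set L) (hμ : IsPnbd μ)
    (hprime : ∀ F : Set L, IsLatFilter F → (⊥ : L) ∉ F →
      ∃ P : Set L, IsLatFilter P ∧ (⊥ : L) ∉ P ∧ F ⊆ P ∧
        ∀ a b : L, a ⊔ b ∈ P → a ∈ P ∨ b ∈ P) :
    ∀ p q : L, cls μ (p ⊔ q) = cls μ p ⊔ cls μ q := by
  intro p q
  apply le_antisymm
  · apply sSup_le
    rintro x ⟨hxt, hx⟩
    set F : Set L := {z | ∃ u ∈ μ x, u ⊓ (p ⊔ q) ≤ z} with hFdef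
    obtain ⟨u0, hu0⟩ := (hμ.1 x).1
    have hF : IsLatFilter F := by
      refine ⟨⟨⊤, u0, hu0, le_top⟩, ?_, ?_⟩
      · rintro a ⟨u, hu, hle⟩ b hab
        exact ⟨u, hu, hle.trans hab⟩
      · rintro a ⟨u, hu, hle⟩ b ⟨v, hv, hvle⟩
        refine ⟨u ⊓ v, (hμ.1 x).2.2 u hu v hv, le_inf ?_ ?_⟩
        · exact (inf_le_inf_right _ inf_le_left).trans hle
        · exact (inf_le_inf_right _ inf_le_right).trans hvle
    have hFbot : (⊥ : L) ∉ F := by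
      rintro ⟨u, hu, hle⟩
      exact hx u hu (le_bot_iff.mp hle)
    obtain ⟨P, hP, hPbot, hFP, hPprime⟩ := hprime F hF hFbot
    have hsup : p ⊔ q ∈ P := hFP ⟨u0, hu0, inf_le_right⟩
    have key : ∀ r : L, r ∈ P → x ∈ {x : L | x ≠ ⊤ ∧ ∀ u ∈ μ x, u ⊓ r ≠ ⊥} := by
      intro r hr
      refine ⟨hxt, fun u hu h => ?_⟩
      have huP : u ∈ P := hFP ⟨u, hu, inf_le_left⟩
      have : u ⊓ r ∈ P := hP.2.2 u huP r hr
      rw [h] at this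
      exact hPbot this
    rcases hPprime p q hsup with hp | hq
    · exact le_sup_of_le_left (le_sSup (key p hp))
    · exact le_sup_of_le_right (le_sSup (key q hq))
  · apply sup_le <;> apply sSup_le_sSup <;> rintro x ⟨hxt, hx⟩ <;>
      refine ⟨hxt, fun u hu h => hx u hu (le_bot_iff.mp ?_)⟩ <;> rw [← h]
    · exact inf_le_inf_left _ le_sup_left
    · exact inf_le_inf_left _ le_sup_right
end

section
/- Let L and K be complete lattices carrying preneighbourhood systems μ and φ respectively, and let f be given by a Galois connection (f_*, f^*) from L to K which is formally surjective (f_*(f^*(y)) = y for all y ∈ K). Assume ⊥ ≠ ⊤ in K. If x ∈ L is μ-closed and f_*(x) ≠ ⊤, then for every y ∈ K: x ⊓ f^*(y) = ⊥ implies y ⊓ f_*(x) = ⊥. -/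
variable {L K N : Type*}

theorem stmt_9 [CompleteLattice L] [CompleteLattice K]
    (μ : L → Set L) (φ : K → Set K) (hμ : IsPnbd μ) (hφ : IsPnbd φ)
    (fs : L → K) (gs : K → L) (hgc : GaloisConnection fs gs)
    (hsurj : ∀ y : K, fs (gs y) = y) (hbt : (⊥ : K) ≠ ⊤)
    (x : L) (hx : cls μ x = x) (hxt : fs x ≠ ⊤) :
    ∀ y : K, x ⊓ gs y = ⊥ → y ⊓ fs x = ⊥ := by
  intro y hdisj
  by_contra hw
  set w : K := y ⊓ fs x with hwdef
  set t : L := gs w with htdef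
  have hft : fs t = w := hsurj w
  have htx : t ⊓ x = ⊥ := by
    have h1 : t ≤ gs y := hgc.monotone_u inf_le_left
    have : t ⊓ x ≤ x ⊓ gs y := le_inf inf_le_right (le_trans inf_le_left h1)
    exact le_bot_iff.mp (hdisj ▸ this)
  -- z = x ⊔ t is not ≤ x
  have hzx : ¬ (x ⊔ t ≤ x) := by
    intro h
    have : t ≤ x := le_sup_right.trans h
    have : t = ⊥ := by
      have := inf_eq_left.mpr this
      rw [this] at htx; exact htx
    apply hw
    rw [← hft, this, hgc.l_bot]
  -- hence z ∉ S by closedness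
  have hznS : ¬ ((x ⊔ t) ≠ ⊤ ∧ ∀ u ∈ μ (x ⊔ t), u ⊓ x ≠ ⊥) := by
    intro hS
    have h := le_sSup (s := {z : L | z ≠ ⊤ ∧ ∀ u ∈ μ z, u ⊓ x ≠ ⊥}) (a := x ⊔ t) hS
    rw [← cls] at h
    rw [hx] at h
    exact hzx h
  have hftop : fs (⊤ : L) = ⊤ := by
    have := hsurj ⊤
    exact top_le_iff.mp (this ▸ hgc.monotone_l le_top)
  rcases not_and_or.mp hznS with hzt | hu
  · -- x ⊔ t = ⊤
    push_neg at hzt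
    apply hxt
    have : fs (x ⊔ t) = fs x ⊔ w := by rw [hgc.l_sup, hft]
    have h2 : fs x ⊔ w = fs x := sup_eq_left.mpr inf_le_right
    rw [hzt, hftop] at this
    rw [← h2, ← this]
  · push_neg at hu
    obtain ⟨u, hu1, hu2⟩ := hu
    have hxu : x ≤ u := le_trans le_sup_left (hμ.2.2 _ u hu1)
    have hxbot : x = ⊥ := by rw [← hu2, inf_eq_right.mpr hxu]
    apply hw
    rw [hwdef, hxbot, hgc.l_bot, inf_bot_eq]
end

section
/- Let L and K be complete lattices carrying preneighbourhood systems μ and φ respectively, and let f be given by a Galois connection (f_*, f^*) from L to K. Suppose f is a preneighbourhood morphism (p ∈ φ(y) implies f^*(p) ∈ μ(f^*(y)) for all y, p ∈ K), f reflects zero (f^*(⊥) = ⊥), and f_* reflects the top (f_*(x) = ⊤ implies x = ⊤). Then f is continuous: f_*(cls_μ(p)) ≤ cls_φ(f_*(p)) for all p ∈ L. -/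
variable {L K N : Type*}

theorem stmt_12 [CompleteLattice L] [CompleteLattice K]
    (μ : L → Set L) (φ : K → Set K) (hμ : IsPnbd μ) (hφ : IsPnbd φ)
    (fs : L → K) (gs : K → L) (hgc : GaloisConnection fs gs)
    (hmor : ∀ y p : K, p ∈ φ y → gs p ∈ μ (gs y))
    (hrz : gs (⊥ : K) = ⊥)
    (hrt : ∀ x : L, fs x = ⊤ → x = ⊤) :
    ∀ p : L, fs (cls μ p) ≤ cls φ (fs p) := by
  intro p
  rw [cls, hgc.l_sSup]
  apply iSup₂_le
  rintro x ⟨hxt, hx⟩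
  apply le_sSup
  refine ⟨fun h => hxt (hrt x h), ?_⟩
  intro v hv hvbot
  have h1 : gs v ∈ μ x := hμ.2.1 x (gs (fs x)) (hgc.le_u_l x) (hmor (fs x) v hv)
  apply hx (gs v) h1
  have h2 : gs v ⊓ p ≤ gs (v ⊓ fs p) := by
    rw [hgc.u_inf]
    exact inf_le_inf_left _ (hgc.le_u_l p)
  rw [hvbot, hrz] at h2
  exact le_bot_iff.mp h2
end

section
/- Let L and K be complete lattices carrying preneighbourhood systems μ and φ respectively, and let (f_*, f^*) be a Galois connection from L to K. Suppose f is continuous, i.e. f_*(cls_μ(x)) ≤ cls_φ(f_*(x)) for every x ∈ L. Then for every φ-closed y ∈ K with f^*(y) ≠ ⊤, the element f^*(y) is μ-closed. -/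
variable {L K N : Type*}

theorem stmt_15 [CompleteLattice L] [CompleteLattice K]
    (μ : L → Set L) (φ : K → Set K) (hμ : IsPnbd μ) (hφ : IsPnbd φ)
    (fs : L → K) (gs : K → L) (hgc : GaloisConnection fs gs)
    (hcont : ∀ x : L, fs (cls μ x) ≤ cls φ (fs x)) :
    ∀ y : K, cls φ y = y → gs y ≠ ⊤ → cls μ (gs y) = gs y := by
  have clsmono : ∀ p q : K, p ≤ q → cls φ p ≤ cls φ q := by
    intro p q hpq
    apply sSup_le_sSup
    rintro x ⟨hx, hu⟩
    exact ⟨hx, fun u hu' h => hu u hu' (le_bot_iff.mp (h ▸ inf_le_inf_left u hpq))⟩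
  intro y hy hne
  apply le_antisymm
  · -- cls μ (gs y) ≤ gs y
    rw [← hgc.le_iff_le]
    calc fs (cls μ (gs y)) ≤ cls φ (fs (gs y)) := hcont _
      _ ≤ cls φ y := clsmono _ _ (hgc.l_u_le y)
      _ = y := hy
  · -- gs y ≤ cls μ (gs y)
    by_cases hb : gs y = ⊥
    · rw [hb]; exact bot_le
    · apply le_sSup
      refine ⟨hne, fun u hu h => hb ?_⟩
      have := hμ.2.2 _ _ hu
      rwa [inf_eq_right.mpr this] at h
end

section
/- Let L, K, N be complete lattices carrying preneighbourhood systems μ, φ, ψ respectively, let (f_*, f^*) be a Galois connection from L to K and (g_*, g^*) a Galois connection from K to N. Suppose the composite g∘f is a closed morphism (cls_ψ(g_*(f_*(p))) ≤ g_*(f_*(cls_μ(p))) for all p ∈ L), f is formally surjective (f_*(f^*(y)) = y for all y ∈ K), and f is continuous (f_*(cls_μ(x)) ≤ cls_φ(f_*(x)) for all x ∈ L). Then g is a closed morphism: cls_ψ(g_*(y)) ≤ g_*(cls_φ(y)) for all y ∈ K. -/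
variable {L K N : Type*}

theorem stmt_17 [CompleteLattice L] [CompleteLattice K] [CompleteLattice N]
    (μ : L → Set L) (φ : K → Set K) (ψ : N → Set N)
    (hμ : IsPnbd μ) (hφ : IsPnbd φ) (hψ : IsPnbd ψ)
    (fs : L → K) (gs : K → L) (hf : GaloisConnection fs gs)
    (fs' : K → N) (gs' : N → K) (hg : GaloisConnection fs' gs')
    (hcomp : ∀ p : L, cls ψ (fs' (fs p)) ≤ fs' (fs (cls μ p)))
    (hsurj : ∀ y : K, fs (gs y) = y)
    (hcont : ∀ x : L, fs (cls μ x) ≤ cls φ (fs x)) :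
    ∀ y : K, cls ψ (fs' y) ≤ fs' (cls φ y) := by
  intro y
  calc cls ψ (fs' y) = cls ψ (fs' (fs (gs y))) := by rw [hsurj]
    _ ≤ fs' (fs (cls μ (gs y))) := hcomp _
    _ ≤ fs' (cls φ (fs (gs y))) := hg.monotone_l (hcont _)
    _ = fs' (cls φ y) := by rw [hsurj]
end
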